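/- Let Λ_∞(α) be an infinite type power series space and Λ₁(β) a nuclear finite type power series space. Write T_θ = T̂_{θ̂} + Ť_{θ̌} with non-zero diagonal entries in each part. Then T_θ : Λ_∞(α) → Λ₁(β) is continuous if and only if it is compact, if and only if θ̂ ∈ Λ₁(β) and θ̌ ∈ (Λ_∞(α))′. -/

import Mathlib

open scoped BigOperators
noncomputable section

/-- A Köthe matrix: non-negative entries, each row eventually positive,
rows non-decreasing in the second index. -/
structure IsKotheMatrix (a : ℕ → ℕ → ℝ) : Prop where
  nonneg : ∀ n k, 0 ≤ a n k
  pos : ∀ n, ∃ k, 0 < a n k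
  mono : ∀ n k, a n k ≤ a n (k + 1)

/-- Membership in the Köthe space `K(a)`. -/
def InKothe (a : ℕ → ℕ → ℝ) (x : ℕ → ℝ) : Prop :=
  ∀ k, Summable fun n => |x n| * a n k

/-- The `k`-th seminorm of the Köthe space `K(a)`. -/
def kNorm (a : ℕ → ℕ → ℝ) (k : ℕ) (x : ℕ → ℝ) : ℝ :=
  ∑' n, |x n| * a n k

/-- Grothendieck–Pietsch nuclearity criterion for a Köthe space. -/
def IsNuclearKothe (a : ℕ → ℕ → ℝ) : Prop :=
  ∀ k, ∃ l, k < l ∧ Summable fun n => a n k / a n l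

/-- The `n`-th unit vector. -/
def unitVec (n : ℕ) : ℕ → ℝ := fun j => if j = n then 1 else 0

/-- Weight of the finite type power series space `Λ₁(β)`. -/
def finW (β : ℕ → ℝ) (k : ℕ) (n : ℕ) : ℝ := Real.exp (-(β n) / (k : ℝ))

/-- Weight of the infinite type power series space `Λ_∞(β)`. -/
def infW (β : ℕ → ℝ) (k : ℕ) (n : ℕ) : ℝ := Real.exp ((k : ℝ) * β n)

/-- The `k`-th seminorm of `Λ₁(β)` (for `0 < k`). -/
def finNorm (β : ℕ → ℝ) (k : ℕ) (x : ℕ → ℝ) : ℝ := ∑' n, |x n| * finW β k n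

/-- The `k`-th seminorm of `Λ_∞(β)`. -/
def infNorm (β : ℕ → ℝ) (k : ℕ) (x : ℕ → ℝ) : ℝ := ∑' n, |x n| * infW β k n

/-- Membership in `Λ₁(β)`. -/
def memFin (β : ℕ → ℝ) (x : ℕ → ℝ) : Prop :=
  ∀ k : ℕ, 0 < k → Summable fun n => |x n| * finW β k n

/-- Membership in `Λ_∞(β)`. -/
def memInf (β : ℕ → ℝ) (x : ℕ → ℝ) : Prop :=
  ∀ k : ℕ, 0 < k → Summable fun n => |x n| * infW β k n

/-- Lower triangular Toeplitz operator `T̂_θ`, `T̂_θ e_n = ∑_{j ≥ n} θ_{j-n} e_j`. -/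
def hatT (θ : ℕ → ℝ) (x : ℕ → ℝ) : ℕ → ℝ :=
  fun j => ∑ i ∈ Finset.range (j + 1), θ (j - i) * x i

/-- Upper triangular Toeplitz operator `Ť_θ`, `Ť_θ e_n = ∑_{j ≤ n} θ_{n-j} e_j`. -/
def checkT (θ : ℕ → ℝ) (x : ℕ → ℝ) : ℕ → ℝ :=
  fun j => ∑' i, θ i * x (j + i)

/-- Operator defined by a matrix acting on sequences. -/
def matOp (t : ℕ → ℕ → ℝ) (x : ℕ → ℝ) : ℕ → ℝ :=
  fun j => ∑' n, t j n * x n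

/-- The growth condition (3.5): `β_s ≤ M (β_{s-t} + β_t)` for all `s > t`. -/
def GrowthCond (β : ℕ → ℝ) (M : ℕ) : Prop :=
  ∀ t s : ℕ, t < s → β s ≤ (M : ℝ) * (β (s - t) + β t)

/-!
If `θ̂ ∈ Λ₁(β)` and `|θ̌_n| ≤ C e^{mα_n}`, then `T̂_{θ̂}` maps `ℓ¹ ⊇ Λ_∞(α)` into `Λ₁(β)` because
the weights of `Λ₁(β)` decrease (a Cauchy product estimate), and `Ť_{θ̌}` maps `Λ_∞(α)` into the
bounded sequences with `‖Ť_{θ̌} x‖_∞ ≤ C ‖x‖_m`, which lie in `Λ₁(β)` by nuclearity. Both bounds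
use the single seminorm `‖·‖_m` of `Λ_∞(α)` for every seminorm of `Λ₁(β)`, so the operator is
even bounded on a neighbourhood of zero. Conversely, testing a continuous `T_θ` on the unit
vectors recovers `θ̂ + θ̌_0 e_0 = T_θ e_0 ∈ Λ₁(β)` and, for `n ≥ 1`,
`|θ̌_n| e^{-β_0} ≤ ‖T_θ e_n‖_1 ≤ C e^{mα_n}`.
-/

open Finset

section Weights

variable {α β : ℕ → ℝ}

lemma finW_pos (β : ℕ → ℝ) (k n : ℕ) : 0 < finW β k n := Real.exp_pos _

lemma infW_pos (α : ℕ → ℝ) (m n : ℕ) : 0 < infW α m n := Real.exp_pos _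

lemma one_le_infW (hα0 : ∀ n, 0 ≤ α n) (m n : ℕ) : 1 ≤ infW α m n :=
  Real.one_le_exp (mul_nonneg m.cast_nonneg (hα0 n))

lemma infW_le_infW (hα0 : ∀ n, 0 ≤ α n) {m m' : ℕ} (h : m ≤ m') (n : ℕ) :
    infW α m n ≤ infW α m' n :=
  Real.exp_le_exp.2 (mul_le_mul_of_nonneg_right (Nat.cast_le.2 h) (hα0 n))

lemma infW_monotone (hαm : Monotone α) (m : ℕ) : Monotone (infW α m) :=
  fun _ _ h => Real.exp_le_exp.2 (mul_le_mul_of_nonneg_left (hαm h) m.cast_nonneg)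

lemma finW_antitone (hβm : Monotone β) (k : ℕ) : Antitone (finW β k) :=
  fun _ _ h => Real.exp_le_exp.2 (div_le_div_of_nonneg_right (neg_le_neg (hβm h)) k.cast_nonneg)

lemma summable_finW (hβ0 : ∀ n, 0 ≤ β n)
    (hnuc : ∀ k : ℕ, 0 < k → ∃ l, k < l ∧
      Summable fun n => Real.exp (-(β n) / (k : ℝ) + β n / (l : ℝ)))
    {k : ℕ} (hk : 0 < k) : Summable (finW β k) := by
  obtain ⟨l, -, hs⟩ := hnuc k hk
  exact hs.of_nonneg_of_le (fun n => (finW_pos β k n).le) fun n =>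
    Real.exp_le_exp.2 (le_add_of_nonneg_right (div_nonneg (hβ0 n) l.cast_nonneg))

lemma memInf.summable (hα0 : ∀ n, 0 ≤ α n) {x : ℕ → ℝ} (hx : memInf α x) (m : ℕ) :
    Summable fun n => |x n| * infW α m n :=
  (hx (m + 1) m.succ_pos).of_nonneg_of_le (fun n => mul_nonneg (abs_nonneg _) (infW_pos α m n).le)
    fun n => mul_le_mul_of_nonneg_left (infW_le_infW hα0 m.le_succ n) (abs_nonneg _)

lemma memInf.summable_abs (hα0 : ∀ n, 0 ≤ α n) {x : ℕ → ℝ} (hx : memInf α x) :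
    Summable fun n => |x n| :=
  (hx 1 one_pos).of_nonneg_of_le (fun _ => abs_nonneg _)
    fun n => le_mul_of_one_le_right (abs_nonneg _) (one_le_infW hα0 1 n)

lemma tsum_abs_le_infNorm (hα0 : ∀ n, 0 ≤ α n) {x : ℕ → ℝ} (hx : memInf α x) (m : ℕ) :
    ∑' n, |x n| ≤ infNorm α m x :=
  (hx.summable_abs hα0).tsum_le_tsum
    (fun n => le_mul_of_one_le_right (abs_nonneg _) (one_le_infW hα0 m n)) (hx.summable hα0 m)

lemma infNorm_nonneg (α : ℕ → ℝ) (m : ℕ) (x : ℕ → ℝ) : 0 ≤ infNorm α m x :=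
  tsum_nonneg fun n => mul_nonneg (abs_nonneg _) (infW_pos α m n).le

lemma finNorm_nonneg (β : ℕ → ℝ) (k : ℕ) (x : ℕ → ℝ) : 0 ≤ finNorm β k x :=
  tsum_nonneg fun n => mul_nonneg (abs_nonneg _) (finW_pos β k n).le

end Weights

section WeightedEstimates

variable {θ x w : ℕ → ℝ}

lemma abs_checkT_le (hw0 : ∀ n, 0 ≤ w n) (hw : Monotone w) {C : ℝ} (hC : 0 ≤ C)
    (hθ : ∀ n, |θ n| ≤ C * w n) (hx : Summable fun n => |x n| * w n) (j : ℕ) :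
    |checkT θ x j| ≤ C * ∑' n, |x n| * w n := by
  have hshift : Summable fun i => |x (j + i)| * w (j + i) :=
    hx.comp_injective (add_right_injective j)
  have hterm (i : ℕ) : ‖θ i * x (j + i)‖ ≤ C * (|x (j + i)| * w (j + i)) := by
    rw [Real.norm_eq_abs, abs_mul]
    calc |θ i| * |x (j + i)| ≤ C * w (j + i) * |x (j + i)| :=
          mul_le_mul_of_nonneg_right
            ((hθ i).trans (mul_le_mul_of_nonneg_left (hw (Nat.le_add_left i j)) hC)) (abs_nonneg _)
      _ = C * (|x (j + i)| * w (j + i)) := by ring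
  calc |checkT θ x j| ≤ ∑' i, C * (|x (j + i)| * w (j + i)) :=
        tsum_of_norm_bounded (hshift.mul_left C).hasSum hterm
    _ = C * ∑' i, |x (j + i)| * w (j + i) := tsum_mul_left
    _ ≤ C * ∑' n, |x n| * w n :=
        mul_le_mul_of_nonneg_left (tsum_comp_le_tsum_of_inj hx
          (fun n => mul_nonneg (abs_nonneg _) (hw0 n)) (add_right_injective j)) hC

lemma abs_hatT_mul_le (hw0 : ∀ n, 0 ≤ w n) (hw : Antitone w) (j : ℕ) :
    |hatT θ x j| * w j ≤ ∑ i ∈ range (j + 1), |x i| * (|θ (j - i)| * w (j - i)) := by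
  calc |hatT θ x j| * w j ≤ (∑ i ∈ range (j + 1), |θ (j - i) * x i|) * w j :=
        mul_le_mul_of_nonneg_right (abs_sum_le_sum_abs _ _) (hw0 j)
    _ = ∑ i ∈ range (j + 1), |x i| * (|θ (j - i)| * w j) := by
        rw [sum_mul]; congr 1; ext i; rw [abs_mul]; ring
    _ ≤ _ := sum_le_sum fun i _ => by gcongr; exact hw (Nat.sub_le j i)

lemma hasSum_hatT_majorant (hx : Summable fun n => |x n|) (hθ : Summable fun n => |θ n| * w n) :
    HasSum (fun j => ∑ i ∈ range (j + 1), |x i| * (|θ (j - i)| * w (j - i)))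
      ((∑' n, |x n|) * ∑' n, |θ n| * w n) :=
  hasSum_sum_range_mul_of_summable_norm (f := fun n => |x n|) (g := fun n => |θ n| * w n)
    hx.abs hθ.abs

lemma summable_abs_hatT_mul (hw0 : ∀ n, 0 ≤ w n) (hw : Antitone w)
    (hx : Summable fun n => |x n|) (hθ : Summable fun n => |θ n| * w n) :
    Summable fun j => |hatT θ x j| * w j :=
  (hasSum_hatT_majorant hx hθ).summable.of_nonneg_of_le
    (fun j => mul_nonneg (abs_nonneg _) (hw0 j)) (abs_hatT_mul_le hw0 hw)

lemma tsum_abs_hatT_mul_le (hw0 : ∀ n, 0 ≤ w n) (hw : Antitone w)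
    (hx : Summable fun n => |x n|) (hθ : Summable fun n => |θ n| * w n) :
    ∑' j, |hatT θ x j| * w j ≤ (∑' n, |x n|) * ∑' n, |θ n| * w n :=
  ((summable_abs_hatT_mul hw0 hw hx hθ).tsum_le_tsum (abs_hatT_mul_le hw0 hw)
    (hasSum_hatT_majorant hx hθ).summable).trans (hasSum_hatT_majorant hx hθ).tsum_eq.le

end WeightedEstimates

section Sufficiency

variable {α β θh θc x : ℕ → ℝ} {m k : ℕ} {C : ℝ}

lemma abs_toeplitz_mul_finW_le (hα0 : ∀ n, 0 ≤ α n) (hαm : Monotone α) (hC : 0 ≤ C)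
    (hθc : ∀ n, |θc n| ≤ C * infW α m n) (hx : memInf α x) (j : ℕ) :
    |(hatT θh x + checkT θc x) j| * finW β k j ≤
      |hatT θh x j| * finW β k j + C * infNorm α m x * finW β k j := by
  rw [← add_mul]
  exact mul_le_mul_of_nonneg_right ((abs_add_le _ _).trans (add_le_add le_rfl
    (abs_checkT_le (fun n => (infW_pos α m n).le) (infW_monotone hαm m) hC hθc
      (hx.summable hα0 m) j))) (finW_pos β k j).le

lemma summable_toeplitz_majorant (hα0 : ∀ n, 0 ≤ α n) (hβ0 : ∀ n, 0 ≤ β n)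
    (hβm : Monotone β)
    (hnuc : ∀ k : ℕ, 0 < k → ∃ l, k < l ∧
      Summable fun n => Real.exp (-(β n) / (k : ℝ) + β n / (l : ℝ)))
    (hθh : memFin β θh) (hx : memInf α x) (hk : 0 < k) :
    Summable fun j => |hatT θh x j| * finW β k j + C * infNorm α m x * finW β k j :=
  (summable_abs_hatT_mul (fun n => (finW_pos β k n).le) (finW_antitone hβm k)
    (hx.summable_abs hα0) (hθh k hk)).add
    ((summable_finW hβ0 hnuc hk).mul_left _)

lemma memFin_toeplitz (hα0 : ∀ n, 0 ≤ α n) (hαm : Monotone α) (hβ0 : ∀ n, 0 ≤ β n)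
    (hβm : Monotone β)
    (hnuc : ∀ k : ℕ, 0 < k → ∃ l, k < l ∧
      Summable fun n => Real.exp (-(β n) / (k : ℝ) + β n / (l : ℝ)))
    (hθh : memFin β θh) (hC : 0 ≤ C) (hθc : ∀ n, |θc n| ≤ C * infW α m n) (hx : memInf α x) :
    memFin β (hatT θh x + checkT θc x) := fun _ hk =>
  (summable_toeplitz_majorant hα0 hβ0 hβm hnuc hθh hx hk).of_nonneg_of_le
    (fun j => mul_nonneg (abs_nonneg _) (finW_pos β _ j).le)
    (abs_toeplitz_mul_finW_le hα0 hαm hC hθc hx)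

lemma finNorm_toeplitz_le (hα0 : ∀ n, 0 ≤ α n) (hαm : Monotone α) (hβ0 : ∀ n, 0 ≤ β n)
    (hβm : Monotone β)
    (hnuc : ∀ k : ℕ, 0 < k → ∃ l, k < l ∧
      Summable fun n => Real.exp (-(β n) / (k : ℝ) + β n / (l : ℝ)))
    (hθh : memFin β θh) (hC : 0 ≤ C) (hθc : ∀ n, |θc n| ≤ C * infW α m n) (hx : memInf α x)
    (hk : 0 < k) :
    finNorm β k (hatT θh x + checkT θc x) ≤
      (finNorm β k θh + C * ∑' n, finW β k n) * infNorm α m x := by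
  have hw0 (n : ℕ) : 0 ≤ finW β k n := (finW_pos β k n).le
  have hhat := summable_abs_hatT_mul hw0 (finW_antitone hβm k) (hx.summable_abs hα0) (hθh k hk)
  calc finNorm β k (hatT θh x + checkT θc x)
      ≤ ∑' j, (|hatT θh x j| * finW β k j + C * infNorm α m x * finW β k j) :=
        (memFin_toeplitz hα0 hαm hβ0 hβm hnuc hθh hC hθc hx k hk).tsum_le_tsum
          (abs_toeplitz_mul_finW_le hα0 hαm hC hθc hx)
          (summable_toeplitz_majorant hα0 hβ0 hβm hnuc hθh hx hk)
    _ = ∑' j, |hatT θh x j| * finW β k j + C * infNorm α m x * ∑' n, finW β k n := by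
        rw [hhat.tsum_add ((summable_finW hβ0 hnuc hk).mul_left _), tsum_mul_left]
    _ ≤ (∑' n, |x n|) * finNorm β k θh + C * infNorm α m x * ∑' n, finW β k n :=
        add_le_add_left (tsum_abs_hatT_mul_le hw0 (finW_antitone hβm k)
          (hx.summable_abs hα0) (hθh k hk)) _
    _ ≤ infNorm α m x * finNorm β k θh + C * infNorm α m x * ∑' n, finW β k n := by
        gcongr
        · exact finNorm_nonneg β k θh
        · exact tsum_abs_le_infNorm hα0 hx m
    _ = (finNorm β k θh + C * ∑' n, finW β k n) * infNorm α m x := by ring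

theorem toeplitz_bounded_of_symbols (hα0 : ∀ n, 0 ≤ α n) (hαm : Monotone α)
    (hβ0 : ∀ n, 0 ≤ β n) (hβm : Monotone β)
    (hnuc : ∀ k : ℕ, 0 < k → ∃ l, k < l ∧
      Summable fun n => Real.exp (-(β n) / (k : ℝ) + β n / (l : ℝ)))
    (hθh : memFin β θh) (hθc : ∃ m, ∃ C > 0, ∀ n, |θc n| ≤ C * infW α m n) :
    (∀ x, memInf α x → memFin β (hatT θh x + checkT θc x)) ∧
      ∃ m, ∀ k : ℕ, 0 < k → ∃ C > 0, ∀ x, memInf α x →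
        finNorm β k (hatT θh x + checkT θc x) ≤ C * infNorm α m x := by
  obtain ⟨m, C, hC, hθc⟩ := hθc
  refine ⟨fun x hx => memFin_toeplitz hα0 hαm hβ0 hβm hnuc hθh hC.le hθc hx, m, fun k hk => ?_⟩
  have hS : 0 ≤ ∑' n, finW β k n := tsum_nonneg fun n => (finW_pos β k n).le
  refine ⟨finNorm β k θh + C * ∑' n, finW β k n + 1,
    add_pos_of_nonneg_of_pos (add_nonneg (finNorm_nonneg β k θh) (mul_nonneg hC.le hS)) one_pos,
    fun x hx => ?_⟩
  exact (finNorm_toeplitz_le hα0 hαm hβ0 hβm hnuc hθh hC.le hθc hx hk).trans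
    (mul_le_mul_of_nonneg_right (le_add_of_nonneg_right zero_le_one) (infNorm_nonneg α m x))

end Sufficiency

section UnitVectors

variable {β x y : ℕ → ℝ}

lemma memInf_unitVec (α : ℕ → ℝ) (n : ℕ) : memInf α (unitVec n) := fun _ _ =>
  summable_of_ne_finset_zero (s := {n}) fun j hj => by
    simp [unitVec, Finset.mem_singleton.not.1 hj]

lemma memFin_unitVec (β : ℕ → ℝ) (n : ℕ) : memFin β (unitVec n) := fun _ _ =>
  summable_of_ne_finset_zero (s := {n}) fun j hj => by
    simp [unitVec, Finset.mem_singleton.not.1 hj]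

lemma infNorm_unitVec (α : ℕ → ℝ) (m n : ℕ) : infNorm α m (unitVec n) = infW α m n := by
  rw [infNorm, tsum_eq_single n fun j hj => by simp [unitVec, hj]]
  simp [unitVec]

lemma hatT_unitVec (θ : ℕ → ℝ) (n j : ℕ) :
    hatT θ (unitVec n) j = if n ≤ j then θ (j - n) else 0 := by
  simp only [hatT, unitVec, mul_ite, mul_one, mul_zero, sum_ite_eq', mem_range, Nat.lt_succ_iff]

lemma checkT_unitVec (θ : ℕ → ℝ) (n j : ℕ) :
    checkT θ (unitVec n) j = if j ≤ n then θ (n - j) else 0 := by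
  split_ifs with h
  · rw [checkT, tsum_eq_single (n - j) fun i hi => by simp [unitVec]; omega]
    simp [unitVec, Nat.add_sub_cancel' h]
  · simp only [checkT, unitVec]
    simp [show ∀ i, j + i ≠ n by omega]

lemma memFin.sub (hx : memFin β x) (hy : memFin β y) : memFin β fun j => x j - y j :=
  fun k hk => ((hx k hk).add (hy k hk)).of_nonneg_of_le
    (fun j => mul_nonneg (abs_nonneg _) (finW_pos β k j).le)
    fun j => by rw [← add_mul]; exact mul_le_mul_of_nonneg_right (abs_sub _ _) (finW_pos β k j).le

lemma memFin.const_mul (hx : memFin β x) (c : ℝ) : memFin β fun j => c * x j :=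
  fun k hk => ((hx k hk).mul_left |c|).congr fun j => by rw [abs_mul, mul_assoc]

lemma abs_mul_finW_le_finNorm {k : ℕ} (hx : Summable fun n => |x n| * finW β k n) (j : ℕ) :
    |x j| * finW β k j ≤ finNorm β k x :=
  hx.le_tsum j fun n _ => mul_nonneg (abs_nonneg _) (finW_pos β k n).le

end UnitVectors

section Necessity

variable {α β θh θc : ℕ → ℝ}

lemma memFin_of_toeplitz_maps
    (hT : ∀ x, memInf α x → memFin β (hatT θh x + checkT θc x)) : memFin β θh := by
  have hθh : θh = fun j =>
      (hatT θh (unitVec 0) + checkT θc (unitVec 0)) j - θc 0 * unitVec 0 j := by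
    ext j
    rcases j.eq_zero_or_pos with rfl | hj
    · simp [hatT_unitVec, checkT_unitVec, unitVec]
    · simp [hatT_unitVec, checkT_unitVec, unitVec, hj.ne', Nat.not_le.2 hj]
  rw [hθh]
  exact (hT _ (memInf_unitVec α 0)).sub ((memFin_unitVec β 0).const_mul _)

lemma exists_abs_le_infW_of_toeplitz_bounded (hα0 : ∀ n, 0 ≤ α n)
    (hT : ∀ x, memInf α x → memFin β (hatT θh x + checkT θc x))
    (hbound : ∃ m, ∃ C > 0, ∀ x, memInf α x →
      finNorm β 1 (hatT θh x + checkT θc x) ≤ C * infNorm α m x) :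
    ∃ m, ∃ C > 0, ∀ n, |θc n| ≤ C * infW α m n := by
  obtain ⟨m, C, hC, hbound⟩ := hbound
  have hw := finW_pos β 1 0
  refine ⟨m, C / finW β 1 0 + |θc 0|, add_pos_of_pos_of_nonneg (div_pos hC hw) (abs_nonneg _),
    fun n => ?_⟩
  rcases n.eq_zero_or_pos with rfl | hn
  · calc |θc 0| ≤ |θc 0| * infW α m 0 := le_mul_of_one_le_right (abs_nonneg _) (one_le_infW hα0 m 0)
      _ ≤ _ := mul_le_mul_of_nonneg_right (le_add_of_nonneg_left (div_pos hC hw).le)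
          (infW_pos α m 0).le
  have hcoord : (hatT θh (unitVec n) + checkT θc (unitVec n)) 0 = θc n := by
    simp [hatT_unitVec, checkT_unitVec, hn.ne']
  have hle : |θc n| * finW β 1 0 ≤ C * infW α m n := by
    calc |θc n| * finW β 1 0 ≤ finNorm β 1 (hatT θh (unitVec n) + checkT θc (unitVec n)) :=
          hcoord ▸ abs_mul_finW_le_finNorm (hT _ (memInf_unitVec α n) 1 one_pos) 0
      _ ≤ C * infW α m n := infNorm_unitVec α m n ▸ hbound _ (memInf_unitVec α n)
  calc |θc n| ≤ C / finW β 1 0 * infW α m n := by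
        rwa [div_mul_eq_mul_div, le_div_iff₀ hw]
    _ ≤ _ := mul_le_mul_of_nonneg_right (le_add_of_nonneg_right (abs_nonneg _))
        (infW_pos α m n).le

theorem symbols_of_toeplitz_continuous (hα0 : ∀ n, 0 ≤ α n)
    (hT : ∀ x, memInf α x → memFin β (hatT θh x + checkT θc x))
    (hbound : ∃ m, ∃ C > 0, ∀ x, memInf α x →
      finNorm β 1 (hatT θh x + checkT θc x) ≤ C * infNorm α m x) :
    memFin β θh ∧ ∃ m, ∃ C > 0, ∀ n, |θc n| ≤ C * infW α m n :=
  ⟨memFin_of_toeplitz_maps hT, exists_abs_le_infW_of_toeplitz_bounded hα0 hT hbound⟩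

end Necessity

theorem stmt19_general (α β : ℕ → ℝ)
    (hα0 : ∀ n, 0 ≤ α n) (hαm : Monotone α)
    (hβ0 : ∀ n, 0 ≤ β n) (hβm : Monotone β)
    (hnuc : ∀ k : ℕ, 0 < k → ∃ l, k < l ∧
      Summable fun n => Real.exp (-(β n) / (k : ℝ) + β n / (l : ℝ)))
    (θh θc : ℕ → ℝ) :
    (((∀ x, memInf α x → memFin β (fun j => hatT θh x j + checkT θc x j)) ∧
        ∀ k : ℕ, 0 < k → ∃ m, ∃ C > 0, ∀ x, memInf α x →
          finNorm β k (fun j => hatT θh x j + checkT θc x j) ≤ C * infNorm α m x)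
      ↔ (memFin β θh ∧ ∃ m, ∃ C > 0, ∀ n, |θc n| ≤ C * infW α m n)) ∧
    (((∀ x, memInf α x → memFin β (fun j => hatT θh x j + checkT θc x j)) ∧
        ∃ m, ∀ k : ℕ, 0 < k → ∃ C > 0, ∀ x, memInf α x →
          finNorm β k (fun j => hatT θh x j + checkT θc x j) ≤ C * infNorm α m x)
      ↔ (memFin β θh ∧ ∃ m, ∃ C > 0, ∀ n, |θc n| ≤ C * infW α m n)) := by
  refine ⟨⟨fun ⟨hT, hbound⟩ => symbols_of_toeplitz_continuous hα0 hT (hbound 1 one_pos),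
      fun h => ?_⟩,
    ⟨fun ⟨hT, m, hbound⟩ => symbols_of_toeplitz_continuous hα0 hT ⟨m, hbound 1 one_pos⟩,
      fun h => toeplitz_bounded_of_symbols hα0 hαm hβ0 hβm hnuc h.1 h.2⟩⟩
  obtain ⟨hT, m, hbound⟩ := toeplitz_bounded_of_symbols hα0 hαm hβ0 hβm hnuc h.1 h.2
  exact ⟨hT, fun k hk => ⟨m, hbound k hk⟩⟩

/-- For `Λ₁(β)` nuclear and `T_θ = T̂_{θ̂} + Ť_{θ̌}` (both diagonal
entries non-zero), `T_θ : Λ_∞(α) → Λ₁(β)` is continuous iff it is compact iff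
`θ̂ ∈ Λ₁(β)` and `θ̌ ∈ (Λ_∞(α))'`. -/
theorem stmt19 (α β : ℕ → ℝ)
    (hα0 : ∀ n, 0 ≤ α n) (hαm : Monotone α)
    (hαi : Filter.Tendsto α Filter.atTop Filter.atTop)
    (hβ0 : ∀ n, 0 ≤ β n) (hβm : Monotone β)
    (hβi : Filter.Tendsto β Filter.atTop Filter.atTop)
    (hnuc : ∀ k : ℕ, 0 < k → ∃ l, k < l ∧
      Summable fun n => Real.exp (-(β n) / (k : ℝ) + β n / (l : ℝ)))
    (θh θc : ℕ → ℝ) (hh : θh 0 ≠ 0) (hc : θc 0 ≠ 0) :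
    (((∀ x, memInf α x → memFin β (fun j => hatT θh x j + checkT θc x j)) ∧
        ∀ k : ℕ, 0 < k → ∃ m, ∃ C > 0, ∀ x, memInf α x →
          finNorm β k (fun j => hatT θh x j + checkT θc x j) ≤ C * infNorm α m x)
      ↔ (memFin β θh ∧ ∃ m, ∃ C > 0, ∀ n, |θc n| ≤ C * infW α m n)) ∧
    (((∀ x, memInf α x → memFin β (fun j => hatT θh x j + checkT θc x j)) ∧
        ∃ m, ∀ k : ℕ, 0 < k → ∃ C > 0, ∀ x, memInf α x →
          finNorm β k (fun j => hatT θh x j + checkT θc x j) ≤ C * infNorm α m x)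
      ↔ (memFin β θh ∧ ∃ m, ∃ C > 0, ∀ n, |θc n| ≤ C * infW α m n)) :=
  stmt19_general α β hα0 hαm hβ0 hβm hnuc θh θc
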